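/- arXiv:2601.21475 — 2 statements merged into one kernel-verified Lean document; each statement's English description precedes it below -/
import Mathlib

section
/- Suppose (V_t) is a nonnegative, almost surely nonincreasing integrable process such that for every ε > 0 there exists η(ε) > 0 with E[V_t - V_{t+1} | 𝓕_t] ≥ η(ε) on the event {V_t > ε}, for all t. Then V_t → 0 almost surely. -/
/-!
On `{V t > ε}` the conditional drift is at least `η`, so `η · P(V t > ε) ≤ E[V t] - E[V (t+1)]`
(Markov's inequality applied to the nonnegative conditional drift). The right-hand sides
telescope against `E[V t] ≥ 0`, hence `∑ P(V t > ε) ≤ E[V 0] / η < ∞`, and Borel–Cantelli gives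
`V t ≤ ε` eventually, almost surely. Intersecting over `ε = 1/(n+1)` yields `V t → 0`.
-/

open MeasureTheory Filter

section

variable {Ω : Type*} {m m₀ : MeasurableSpace Ω} {μ : Measure Ω}

theorem mul_measureReal_le_integral_sub_of_le_condExp [IsFiniteMeasure μ] (hm : m ≤ m₀)
    {X Y : Ω → ℝ} (hX : Integrable X μ) (hY : Integrable Y μ) (hYX : Y ≤ᵐ[μ] X)
    {s : Set Ω} {η : ℝ} (hη : 0 ≤ η) (hs : ∀ᵐ ω ∂μ, ω ∈ s → η ≤ μ[X - Y | m] ω) :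
    η * μ.real s ≤ ∫ ω, X ω ∂μ - ∫ ω, Y ω ∂μ := by
  have hs_sub : s ≤ᵐ[μ] {ω | η ≤ μ[X - Y | m] ω} := hs
  have hdrift_nonneg : 0 ≤ᵐ[μ] μ[X - Y | m] :=
    condExp_nonneg (hYX.mono fun _ h => sub_nonneg.2 h)
  calc η * μ.real s
      ≤ η * μ.real {ω | η ≤ μ[X - Y | m] ω} :=
        mul_le_mul_of_nonneg_left
          (ENNReal.toReal_mono (measure_ne_top μ _) (measure_mono_ae hs_sub)) hη
    _ ≤ ∫ ω, (μ[X - Y | m]) ω ∂μ :=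
        mul_meas_ge_le_integral_of_nonneg hdrift_nonneg integrable_condExp η
    _ = ∫ ω, X ω ∂μ - ∫ ω, Y ω ∂μ := by
        rw [integral_condExp hm]
        exact integral_sub hX hY

theorem ae_eventually_notMem_of_summable_measureReal [IsFiniteMeasure μ] {s : ℕ → Set Ω}
    (hs : Summable fun t => μ.real (s t)) : ∀ᵐ ω ∂μ, ∀ᶠ t in atTop, ω ∉ s t := by
  refine ae_eventually_notMem ?_
  simp_rw [← ofReal_measureReal (measure_ne_top μ _)]
  rw [← ENNReal.ofReal_tsum_of_nonneg (fun _ => measureReal_nonneg) hs]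
  exact ENNReal.ofReal_ne_top

theorem ae_tendsto_zero_of_forall_ae_eventually_le {V : ℕ → Ω → ℝ}
    (hnonneg : ∀ᵐ ω ∂μ, ∀ t, 0 ≤ V t ω)
    (hle : ∀ ε : ℝ, 0 < ε → ∀ᵐ ω ∂μ, ∀ᶠ t in atTop, V t ω ≤ ε) :
    ∀ᵐ ω ∂μ, Tendsto (fun t => V t ω) atTop (nhds 0) := by
  have hle_inv : ∀ᵐ ω ∂μ, ∀ n : ℕ, ∀ᶠ t in atTop, V t ω ≤ 1 / (n + 1) :=
    ae_all_iff.2 fun n => hle _ Nat.one_div_pos_of_nat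
  filter_upwards [hle_inv, hnonneg] with ω hω hω_nonneg
  refine tendsto_order.2 ⟨fun a ha => Eventually.of_forall fun t => ha.trans_le (hω_nonneg t),
    fun ε hε => ?_⟩
  obtain ⟨n, hn⟩ := exists_nat_one_div_lt hε
  exact (hω n).mono fun t ht => ht.trans_lt hn

end

theorem summable_of_mul_le_sub {p a : ℕ → ℝ} {η : ℝ} (hη : 0 < η) (hp : ∀ t, 0 ≤ p t)
    (ha : ∀ t, 0 ≤ a t) (h : ∀ t, η * p t ≤ a t - a (t + 1)) : Summable p := by
  refine summable_of_sum_range_le (c := a 0 / η) hp fun T => ?_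
  rw [le_div_iff₀' hη, Finset.mul_sum]
  calc ∑ t ∈ Finset.range T, η * p t
      ≤ ∑ t ∈ Finset.range T, (a t - a (t + 1)) := Finset.sum_le_sum fun t _ => h t
    _ = a 0 - a T := Finset.sum_range_sub' a T
    _ ≤ a 0 := sub_le_self _ (ha T)

theorem abom_drift_to_zero_general
    {Ω : Type*} {m : MeasurableSpace Ω} (μ : Measure Ω) [IsProbabilityMeasure μ]
    (ℱ : Filtration ℕ m) (V : ℕ → Ω → ℝ)
    (hint : ∀ t, Integrable (V t) μ)
    (hnonneg : ∀ t, ∀ᵐ ω ∂μ, 0 ≤ V t ω)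
    (hmono : ∀ t, ∀ᵐ ω ∂μ, V (t + 1) ω ≤ V t ω)
    (hdrift : ∀ ε : ℝ, 0 < ε → ∃ η : ℝ, 0 < η ∧ ∀ t, ∀ᵐ ω ∂μ,
      ε < V t ω → η ≤ (μ[fun ω' => V t ω' - V (t + 1) ω' | ℱ t]) ω) :
    ∀ᵐ ω ∂μ, Tendsto (fun t => V t ω) atTop (nhds 0) := by
  refine ae_tendsto_zero_of_forall_ae_eventually_le (ae_all_iff.2 hnonneg) fun ε hε => ?_
  obtain ⟨η, hη, hdrift_ε⟩ := hdrift ε hε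
  have hstep : ∀ t, η * μ.real {ω | ε < V t ω} ≤ ∫ ω, V t ω ∂μ - ∫ ω, V (t + 1) ω ∂μ :=
    fun t => mul_measureReal_le_integral_sub_of_le_condExp (ℱ.le t) (hint t) (hint (t + 1))
      (hmono t) hη.le (hdrift_ε t)
  have hsummable : Summable fun t => μ.real {ω | ε < V t ω} :=
    summable_of_mul_le_sub hη (fun _ => measureReal_nonneg)
      (fun t => integral_nonneg_of_ae (hnonneg t)) hstep
  filter_upwards [ae_eventually_notMem_of_summable_measureReal hsummable] with ω hω
  exact hω.mono fun _ ht => not_lt.1 ht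

/-- A nonnegative, a.s. nonincreasing, integrable adapted process with a
positive drift away from zero (for every `ε > 0` there is `η(ε) > 0` with
`E[V t − V (t+1) | 𝓕 t] ≥ η ε` on the event `{V t > ε}`) converges to `0`
almost surely. -/
theorem abom_drift_to_zero
    {Ω : Type*} {m : MeasurableSpace Ω} (μ : Measure Ω) [IsProbabilityMeasure μ]
    (ℱ : Filtration ℕ m) (V : ℕ → Ω → ℝ)
    (hadapted : Adapted ℱ V)
    (hint : ∀ t, Integrable (V t) μ)
    (hnonneg : ∀ t, ∀ᵐ ω ∂μ, 0 ≤ V t ω)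
    (hmono : ∀ t, ∀ᵐ ω ∂μ, V (t + 1) ω ≤ V t ω)
    (hdrift : ∀ ε : ℝ, 0 < ε → ∃ η : ℝ, 0 < η ∧ ∀ t, ∀ᵐ ω ∂μ,
      ε < V t ω → η ≤ (μ[fun ω' => V t ω' - V (t + 1) ω' | ℱ t]) ω) :
    ∀ᵐ ω ∂μ, Tendsto (fun t => V t ω) atTop (nhds 0) :=
  abom_drift_to_zero_general μ ℱ V hint hnonneg hmono hdrift
end

section
/- Let (f_t*) be a nonincreasing sequence bounded below by f*, adapted to a filtration, and suppose that for every ε > 0 there is a constant q(ε) > 0 such that, whenever f_t* > f* + ε, the conditional probability (given 𝓕_t) that f_{t+1}* < f* + ε/2 is at least q(ε). Then f_t* → f* almost surely. -/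
open MeasureTheory Filter

/-! On the event `{∀ t, f t > f* + ε}` the conditional probabilities of improving below
`f* + ε / 2` are bounded below by `q(ε) > 0`, so their sum diverges; by Lévy's extension of
the Borel–Cantelli lemma the improvement then happens infinitely often, which is absurd on
that event. Hence almost surely `f` eventually drops below every level `f* + ε`, and
monotonicity together with the lower bound `f*` gives convergence. -/

theorem Antitone.tendsto_of_forall_le_of_exists_le {x : ℕ → ℝ} {c : ℝ} (hx : Antitone x)
    (hbdd : ∀ t, c ≤ x t) (hle : ∀ ε > 0, ∃ t, x t ≤ c + ε) :
    Tendsto x atTop (nhds c) := by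
  refine tendsto_order.2 ⟨fun a ha => Eventually.of_forall fun t => ha.trans_le (hbdd t),
    fun b hb => ?_⟩
  obtain ⟨t, ht⟩ := hle ((b - c) / 2) (by linarith)
  exact eventually_atTop.2 ⟨t, fun s hs => (hx hs).trans_lt (by linarith)⟩

section BorelCantelli

variable {Ω : Type*} {m : MeasurableSpace Ω} {μ : Measure Ω} [IsFiniteMeasure μ]
  {ℱ : Filtration ℕ m}

theorem ae_frequently_mem_of_forall_le_condExp_indicator {s : ℕ → Set Ω}
    (hs : ∀ n, MeasurableSet[ℱ n] (s n)) {p : ℕ → Ω → Prop} {q : ℝ} (hq : 0 < q)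
    (h : ∀ n, ∀ᵐ ω ∂μ, p n ω → q ≤ μ[(s (n + 1)).indicator 1 | ℱ n] ω) :
    ∀ᵐ ω ∂μ, (∀ n, p n ω) → ∃ᶠ n in atTop, ω ∈ s n := by
  filter_upwards [ae_mem_limsup_atTop_iff μ hs, ae_all_iff.2 h] with ω hlevy hcond hp
  rw [← mem_limsup_iff_frequently_mem]
  refine hlevy.2 (tendsto_atTop_mono (fun n => ?_)
    (tendsto_natCast_atTop_atTop.atTop_mul_const hq))
  simpa using Finset.card_nsmul_le_sum (Finset.range n) _ q fun k _ => hcond k (hp k)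

theorem ae_exists_le_of_le_condExp_indicator_lt {f : ℕ → Ω → ℝ} (hf : Adapted ℱ f)
    {a b q : ℝ} (hba : b ≤ a) (hq : 0 < q)
    (h : ∀ t, ∀ᵐ ω ∂μ, a < f t ω →
      q ≤ μ[{ω' | f (t + 1) ω' < b}.indicator (fun _ => (1 : ℝ)) | ℱ t] ω) :
    ∀ᵐ ω ∂μ, ∃ t, f t ω ≤ a := by
  have hs : ∀ t, MeasurableSet[ℱ t] {ω | f t ω < b} := fun t =>
    measurableSet_lt (hf t) measurable_const
  filter_upwards [ae_frequently_mem_of_forall_le_condExp_indicator hs hq h] with ω hfreq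
  by_contra! habove
  obtain ⟨t, ht⟩ := (hfreq habove).exists
  exact lt_asymm (habove t) (ht.trans_le hba)

end BorelCantelli

/-- Let `(f t)` be a nonincreasing adapted sequence bounded below by `fstar`.
If for every `ε > 0` there is `q ε > 0` such that, whenever `f t > fstar + ε`,
the conditional probability given `𝓕 t` that `f (t+1) < fstar + ε/2` is at
least `q ε`, then `f t → fstar` almost surely. -/
theorem abom_conditional_improvement_convergence
    {Ω : Type*} {m : MeasurableSpace Ω} (μ : Measure Ω) [IsProbabilityMeasure μ]
    (ℱ : Filtration ℕ m) (f : ℕ → Ω → ℝ) (fstar : ℝ)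
    (hadapted : Adapted ℱ f)
    (hmono : ∀ t, ∀ᵐ ω ∂μ, f (t + 1) ω ≤ f t ω)
    (hbdd : ∀ t, ∀ᵐ ω ∂μ, fstar ≤ f t ω)
    (himp : ∀ ε : ℝ, 0 < ε → ∃ q : ℝ, 0 < q ∧ ∀ t, ∀ᵐ ω ∂μ,
      fstar + ε < f t ω →
        q ≤ (μ[Set.indicator {ω' | f (t + 1) ω' < fstar + ε / 2}
              (fun _ => (1 : ℝ)) | ℱ t]) ω) :
    ∀ᵐ ω ∂μ, Tendsto (fun t => f t ω) atTop (nhds fstar) := by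
  have hlevel : ∀ ε > 0, ∀ᵐ ω ∂μ, ∃ t, f t ω ≤ fstar + ε := fun ε hε => by
    obtain ⟨q, hq, himpε⟩ := himp ε hε
    exact ae_exists_le_of_le_condExp_indicator_lt hadapted (by linarith) hq himpε
  filter_upwards [ae_all_iff.2 hmono, ae_all_iff.2 hbdd,
    ae_all_iff.2 fun n : ℕ => hlevel (1 / (n + 1)) Nat.one_div_pos_of_nat]
    with ω hmono hbdd hlevel
  refine (antitone_nat_of_succ_le hmono).tendsto_of_forall_le_of_exists_le hbdd fun ε hε => ?_
  obtain ⟨n, hn⟩ := exists_nat_one_div_lt hε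
  obtain ⟨t, ht⟩ := hlevel n
  exact ⟨t, ht.trans (by linarith)⟩
end
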